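/- arXiv:2211.10571 — 5 statements merged into one kernel-verified Lean document; each statement's English description precedes it below -/
import Mathlib

section
/- Let c be a real number with -2 ≤ c ≤ 1/4 and a_c = (1 + √(1 - 4c))/2. Then the real filled Julia set of f_c(x) = x^2 + c equals the interval [-a_c, a_c], i.e., a real number x has bounded forward orbit under f_c if and only if -a_c ≤ x ≤ a_c. -/
/-!
The endpoint `a` is the larger fixed point of `f y = y ^ 2 + c`, so `f` maps `[-a, a]` into
`[c, a] ⊆ [-a, a]` (the last inclusion is `a ≤ 2`, i.e. `-2 ≤ c`). Outside, `f` is even and for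
`t > a ≥ 1/2` the displacement `f y - y` is increasing on `[t, ∞)`, so the orbit of `|x| > a`
moves right by at least `f |x| - |x| > 0` at every step and escapes.
-/

open Function Set

section
variable {a c : ℝ}

lemma sq_add_mapsTo_Icc (hfix : a ^ 2 + c = a) (ha : a ≤ 2) :
    MapsTo (fun y : ℝ => y ^ 2 + c) (Icc (-a) a) (Icc (-a) a) := by
  rintro y ⟨hl, hr⟩
  have ha0 : 0 ≤ a := by linarith
  simp only [mem_Icc]
  constructor <;> nlinarith [sq_nonneg y]

lemma add_mul_le_iterate_sq_add (hfix : a ^ 2 + c = a) (ha : 1 / 2 ≤ a) {t : ℝ} (ht : a < t)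
    (n : ℕ) : t + n * (t ^ 2 + c - t) ≤ (fun y : ℝ => y ^ 2 + c)^[n] t := by
  have hδ : 0 < t ^ 2 + c - t := by nlinarith
  induction n with
  | zero => simp
  | succ n ih =>
    rw [iterate_succ_apply']
    set y := (fun y : ℝ => y ^ 2 + c)^[n] t
    have hty : t ≤ y := le_trans (le_add_of_nonneg_right (by positivity)) ih
    -- `y ↦ y ^ 2 + c - y` is increasing on `[1/2, ∞)`
    have hstep : t ^ 2 + c - t ≤ y ^ 2 + c - y := by nlinarith
    push_cast
    linarith

lemma not_bounded_iterate_sq_add (hfix : a ^ 2 + c = a) (ha : 1 / 2 ≤ a) {x : ℝ}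
    (hx : a < |x|) : ¬ ∃ B : ℝ, ∀ n : ℕ, |(fun y : ℝ => y ^ 2 + c)^[n] x| ≤ B := by
  rintro ⟨B, hB⟩
  have hδ : 0 < |x| ^ 2 + c - |x| := by nlinarith
  obtain ⟨n, hn⟩ := exists_nat_gt ((B - |x|) / (|x| ^ 2 + c - |x|))
  have horbit : (fun y : ℝ => y ^ 2 + c)^[n + 1] x = (fun y : ℝ => y ^ 2 + c)^[n + 1] |x| := by
    simp only [iterate_succ_apply, sq_abs]
  have hgrow := add_mul_le_iterate_sq_add hfix ha hx (n + 1)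
  have hbound := (le_abs_self _).trans (hB (n + 1))
  rw [div_lt_iff₀ hδ] at hn
  push_cast at hgrow
  nlinarith

end

theorem stmt_5 (c : ℝ) (hc1 : -2 ≤ c) (hc2 : c ≤ 1/4)
    (a : ℝ) (ha : a = (1 + Real.sqrt (1 - 4*c))/2) (x : ℝ) :
    (∃ B : ℝ, ∀ n : ℕ, |(fun y : ℝ => y^2 + c)^[n] x| ≤ B) ↔
      (-a ≤ x ∧ x ≤ a) := by
  have hsqrt_sq : Real.sqrt (1 - 4 * c) ^ 2 = 1 - 4 * c := Real.sq_sqrt (by linarith)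
  have hsqrt_nonneg := Real.sqrt_nonneg (1 - 4 * c)
  have hfix : a ^ 2 + c = a := by subst ha; nlinarith
  have ha_half : 1 / 2 ≤ a := by subst ha; linarith
  have ha_two : a ≤ 2 := by subst ha; nlinarith
  constructor
  · intro hbounded
    by_contra hx
    refine not_bounded_iterate_sq_add hfix ha_half ?_ hbounded
    rw [lt_abs]
    by_contra! h
    exact hx ⟨by linarith, h.1⟩
  · intro hx
    exact ⟨a, fun n => abs_le.2 ((sq_add_mapsTo_Icc hfix ha_two).iterate n hx)⟩
end

section
/- Let c ≤ -2 be a real number and a_c = (1 + √(1 - 4c))/2. If w is a real number with |w| ≤ a_c, then every complex solution z of z² + c = w is real and satisfies |z| ≤ a_c. -/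
/-!
Since `a` is a fixed point of `x ↦ x² + c`, we have `a² = a - c`. Hence `z² = w - c` lies in
`[-a - c, a - c] = [a² - 2a, a²]`, which is contained in `[0, a²]` because `a ≥ 2`. A complex
number whose square is a nonnegative real `s` is `±√s`, so `z` is real with `|z| ≤ a`.
-/

noncomputable def positiveFixedPoint (c : ℝ) : ℝ := (1 + Real.sqrt (1 - 4 * c)) / 2

lemma positiveFixedPoint_sq_add {c : ℝ} (hc : c ≤ 1 / 4) :
    positiveFixedPoint c ^ 2 + c = positiveFixedPoint c := by
  have hsq := Real.sq_sqrt (show 0 ≤ 1 - 4 * c by linarith)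
  unfold positiveFixedPoint
  linear_combination hsq / 4

lemma two_le_positiveFixedPoint {c : ℝ} (hc : c ≤ -2) : 2 ≤ positiveFixedPoint c := by
  have hsqrt : (3 : ℝ) ≤ Real.sqrt (1 - 4 * c) :=
    Real.le_sqrt_of_sq_le (by linarith)
  unfold positiveFixedPoint
  linarith

lemma Complex.exists_ofReal_of_sq_eq_ofReal {z : ℂ} {s : ℝ} (hs : 0 ≤ s) (h : z ^ 2 = s) :
    ∃ r : ℝ, z = r ∧ r ^ 2 = s := by
  have hz : z ^ 2 = (Real.sqrt s : ℂ) ^ 2 := by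
    rw [h, ← Complex.ofReal_pow, Real.sq_sqrt hs]
  rcases sq_eq_sq_iff_eq_or_eq_neg.mp hz with hpos | hneg
  · exact ⟨Real.sqrt s, hpos, Real.sq_sqrt hs⟩
  · exact ⟨-Real.sqrt s, by rw [hneg, Complex.ofReal_neg], by rw [neg_sq, Real.sq_sqrt hs]⟩

lemma sub_mem_Icc_of_abs_le_positiveFixedPoint {c w : ℝ} (hc : c ≤ -2)
    (hw : |w| ≤ positiveFixedPoint c) : w - c ∈ Set.Icc 0 (positiveFixedPoint c ^ 2) := by
  have hfix := positiveFixedPoint_sq_add (show c ≤ 1 / 4 by linarith)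
  have htwo := two_le_positiveFixedPoint hc
  obtain ⟨hlow, hhigh⟩ := abs_le.mp hw
  constructor <;> nlinarith

theorem stmt_6 (c : ℝ) (hc : c ≤ -2)
    (a : ℝ) (ha : a = (1 + Real.sqrt (1 - 4*c))/2)
    (w : ℝ) (hw : |w| ≤ a) (z : ℂ) (hz : z^2 + (c : ℂ) = (w : ℂ)) :
    ∃ r : ℝ, z = (r : ℂ) ∧ |r| ≤ a := by
  rw [show a = positiveFixedPoint c from ha] at hw ⊢
  obtain ⟨hnonneg, hle⟩ := sub_mem_Icc_of_abs_le_positiveFixedPoint hc hw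
  have hz' : z ^ 2 = ((w - c : ℝ) : ℂ) := by
    push_cast
    linear_combination hz
  obtain ⟨r, rfl, hr⟩ := Complex.exists_ofReal_of_sq_eq_ofReal hnonneg hz'
  refine ⟨r, rfl, abs_le_of_sq_le_sq (hr ▸ hle) ?_⟩
  linarith [two_le_positiveFixedPoint hc]
end

section
/- Let L be a field with a nonarchimedean absolute value |·| and let c ∈ L with |c| > 1. If x ∈ L has bounded forward orbit under f_c(x) = x² + c, then |x|² = |c|. -/
-- If v a > v b then v (a + b) = v a (strong triangle inequality equality case)
lemma na_add_eq {L : Type*} [Field L] (v : AbsoluteValue L ℝ)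
    (hna : IsNonarchimedean (fun x : L => v x))
    {a b : L} (h : v b < v a) : v (a + b) = v a := by
  have h1 : v (a + b) ≤ max (v a) (v b) := hna a b
  have h2 : v a ≤ max (v (a + b)) (v b) := by
    have := hna (a + b) (-b)
    simpa using this
  rcases le_max_iff.mp h2 with h3 | h3
  · exact le_antisymm (by simpa [max_eq_left h.le] using h1) h3
  · exact absurd h3 (not_le.mpr h)

lemma escape {L : Type*} [Field L] (v : AbsoluteValue L ℝ)
    (hna : IsNonarchimedean (fun x : L => v x))
    (c : L) (hc : v c > 1) (y : L) (hy : (v y)^2 > v c) :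
    ∀ n : ℕ, v ((fun z : L => z^2 + c)^[n] y) = (v y)^(2^n) := by
  have hy1 : 1 < v y := by
    nlinarith [v.nonneg y]
  intro n
  induction n with
  | zero => simp
  | succ n ih =>
    rw [Function.iterate_succ_apply']
    have ha : v (((fun z : L => z^2 + c)^[n] y)^2) = (v y)^(2^(n+1)) := by
      rw [map_pow, ih, ← pow_mul, pow_succ]
    have hgt : v c < v (((fun z : L => z^2 + c)^[n] y)^2) := by
      rw [ha]
      calc v c < (v y)^2 := hy
        _ ≤ (v y)^(2^(n+1)) := pow_le_pow_right₀ hy1.le (by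
            have := Nat.one_lt_two_pow (n := n+1) (by omega)
            omega)
    show v (((fun z : L => z^2 + c)^[n] y)^2 + c) = _
    rw [na_add_eq v hna hgt, ha]

lemma unbounded {L : Type*} [Field L] (v : AbsoluteValue L ℝ)
    (hna : IsNonarchimedean (fun x : L => v x))
    (c : L) (hc : v c > 1) (y : L) (hy : (v y)^2 > v c)
    (B : ℝ) : ∃ n : ℕ, B < v ((fun z : L => z^2 + c)^[n] y) := by
  have hy1 : 1 < v y := by nlinarith [v.nonneg y]
  obtain ⟨n, hn⟩ := pow_unbounded_of_one_lt B hy1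
  refine ⟨n, ?_⟩
  rw [escape v hna c hc y hy n]
  calc B < (v y)^n := hn
    _ ≤ (v y)^(2^n) := pow_le_pow_right₀ hy1.le (Nat.lt_two_pow_self (n := n)).le

theorem stmt_10 {L : Type*} [Field L] (v : AbsoluteValue L ℝ)
    (hna : IsNonarchimedean (fun x : L => v x))
    (c : L) (hc : v c > 1) (x : L)
    (hx : ∃ B : ℝ, ∀ n : ℕ, v ((fun y : L => y^2 + c)^[n] x) ≤ B) :
    (v x)^2 = v c := by
  obtain ⟨B, hB⟩ := hx
  by_contra h
  rcases lt_or_gt_of_ne h with hlt | hgt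
  · -- (v x)^2 < v c, then v (f x) = v c and ((v (f x))^2 = (v c)^2 > v c
    have hfx : v (x^2 + c) = v c := by
      rw [add_comm]
      apply na_add_eq v hna
      rw [map_pow]; exact hlt
    have h2 : (v (x^2 + c))^2 > v c := by
      rw [hfx]; nlinarith
    obtain ⟨n, hn⟩ := unbounded v hna c hc (x^2 + c) h2 B
    have := hB (n + 1)
    rw [Function.iterate_succ_apply] at this
    linarith
  · obtain ⟨n, hn⟩ := unbounded v hna c hc x hgt B
    linarith [hB n]
end

section
/- Let a and b be coprime integers with b ≠ 0, let f(x) = x² + a/b over ℚ̄, and let φ(x) = b^(-1/2) x (for a fixed square root of b). Then every preperiodic point of f^φ(x) = b^(-1/2)(x² + a) is an algebraic integer. -/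
/-!
Put `y_k = f^[k] α` for `f x = (x ^ 2 + a) / s`. Clearing denominators, `s ^ (2 ^ k - 1) * y_k = P_k(α)`
where `P_0 = X`, `P_{k+1} = P_k ^ 2 + a * b ^ (2 ^ k - 1)` is monic of degree `2 ^ k` with coefficients
in the base ring. If `y_n = y_m` with `m < n`, squaring turns the odd powers of `s` into powers of `b`,
so `α` is a root of the monic polynomial `P_n ^ 2 - b ^ (2 ^ n - 2 ^ m) * P_m ^ 2`.
-/

open Polynomial

section

variable {R K : Type*} [CommRing R] [Field K] [Algebra R K]

noncomputable def scaledIterPoly (a b : R) : ℕ → R[X]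
  | 0 => X
  | k + 1 => scaledIterPoly a b k ^ 2 + C (a * b ^ (2 ^ k - 1))

theorem scaledIterPoly_monic_natDegree [Nontrivial R] (a b : R) (k : ℕ) :
    (scaledIterPoly a b k).Monic ∧ (scaledIterPoly a b k).natDegree = 2 ^ k := by
  induction k with
  | zero => exact ⟨monic_X, natDegree_X⟩
  | succ k ih =>
    obtain ⟨hmonic, hdeg⟩ := ih
    have hsq_deg : (scaledIterPoly a b k ^ 2).natDegree = 2 ^ (k + 1) := by
      rw [hmonic.natDegree_pow, hdeg, pow_succ, mul_comm]
    have hC_lt : (C (a * b ^ (2 ^ k - 1))).degree < (scaledIterPoly a b k ^ 2).degree := by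
      rw [degree_eq_natDegree (hmonic.pow 2).ne_zero, hsq_deg]
      exact degree_C_le.trans_lt (by exact_mod_cast Nat.two_pow_pos (k + 1))
    exact ⟨(hmonic.pow 2).add_of_left hC_lt, by simp only [scaledIterPoly, natDegree_add_C, hsq_deg]⟩

theorem aeval_scaledIterPoly {a b : R} {s : K} (hs : s ^ 2 = algebraMap R K b) (hs0 : s ≠ 0)
    (α : K) (k : ℕ) :
    aeval α (scaledIterPoly a b k) =
      s ^ (2 ^ k - 1) * (fun x : K => (x ^ 2 + algebraMap R K a) / s)^[k] α := by
  induction k with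
  | zero => simp [scaledIterPoly]
  | succ k ih =>
    have hexp : 2 ^ (k + 1) - 1 = 2 * (2 ^ k - 1) + 1 := by
      have := Nat.one_le_two_pow (n := k); omega
    rw [Function.iterate_succ_apply', scaledIterPoly, map_add, map_pow, ih, aeval_C, map_mul,
      map_pow, ← hs, hexp]
    field_simp
    ring

theorem monic_scaledIterPoly_sq_sub [Nontrivial R] (a b c : R) {m n : ℕ} (hmn : m < n) :
    (scaledIterPoly a b n ^ 2 - C c * scaledIterPoly a b m ^ 2).Monic := by
  obtain ⟨hmonic_n, hdeg_n⟩ := scaledIterPoly_monic_natDegree a b n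
  obtain ⟨hmonic_m, hdeg_m⟩ := scaledIterPoly_monic_natDegree a b m
  refine (hmonic_n.pow 2).sub_of_left ?_
  rw [degree_eq_natDegree (hmonic_n.pow 2).ne_zero, hmonic_n.natDegree_pow, hdeg_n,
    ← smul_eq_C_mul]
  refine (degree_smul_le _ _).trans_lt ?_
  rw [degree_eq_natDegree (hmonic_m.pow 2).ne_zero, hmonic_m.natDegree_pow, hdeg_m]
  exact_mod_cast Nat.mul_lt_mul_of_pos_left (Nat.pow_lt_pow_right one_lt_two hmn) two_pos

theorem isIntegral_of_iterate_eq {a b : R} {s : K} (hs : s ^ 2 = algebraMap R K b) (hs0 : s ≠ 0)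
    {α : K} {m n : ℕ} (hmn : m < n)
    (heq : (fun x : K => (x ^ 2 + algebraMap R K a) / s)^[n] α =
      (fun x : K => (x ^ 2 + algebraMap R K a) / s)^[m] α) :
    IsIntegral R α := by
  have : Nontrivial R := (algebraMap R K).domain_nontrivial
  refine ⟨_, monic_scaledIterPoly_sq_sub a b (b ^ (2 ^ n - 2 ^ m)) hmn, ?_⟩
  have hexp : (2 ^ n - 1) * 2 = 2 * (2 ^ n - 2 ^ m) + (2 ^ m - 1) * 2 := by
    have := Nat.one_le_two_pow (n := m)
    have := Nat.pow_le_pow_right two_pos hmn.le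
    omega
  have hn := aeval_scaledIterPoly (a := a) hs hs0 α n
  have hm := aeval_scaledIterPoly (a := a) hs hs0 α m
  rw [heq] at hn
  rw [← aeval_def, map_sub, map_mul, aeval_C, map_pow, map_pow, map_pow, hn, hm, ← hs, mul_pow,
    mul_pow, ← pow_mul, ← pow_mul, ← pow_mul, hexp, pow_add]
  ring

end

theorem stmt_14_general (a b : ℤ) (hb : b ≠ 0)
    (s : ℂ) (hs : s^2 = (b : ℂ)) (α : ℂ)
    (hpre : ∃ m n : ℕ, m < n ∧
      (fun x : ℂ => (x^2 + (a : ℂ))/s)^[n] α =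
      (fun x : ℂ => (x^2 + (a : ℂ))/s)^[m] α) :
    IsIntegral ℤ α := by
  obtain ⟨m, n, hmn, heq⟩ := hpre
  have hs0 : s ≠ 0 := by
    rintro rfl
    exact hb (by exact_mod_cast hs.symm.trans (zero_pow two_ne_zero))
  exact isIntegral_of_iterate_eq (a := a) (b := b) (by simpa using hs) hs0 hmn (by simpa using heq)

theorem stmt_14 (a b : ℤ) (hb : b ≠ 0) (hab : IsCoprime a b)
    (s : ℂ) (hs : s^2 = (b : ℂ)) (α : ℂ)
    (hpre : ∃ m n : ℕ, m < n ∧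
      (fun x : ℂ => (x^2 + (a : ℂ))/s)^[n] α =
      (fun x : ℂ => (x^2 + (a : ℂ))/s)^[m] α) :
    IsIntegral ℤ α :=
  stmt_14_general a b hb s hs α hpre
end

section
/- The only totally real preperiodic points of f(x) = x² + 1/4 are 1/2 and -1/2. -/
/-!
A totally real `α` is real, being a root of its own minimal polynomial. Since `x ≤ x² + 1/4`,
real orbits of `f` are nondecreasing, so a preperiodic real orbit reaches a fixed point, which
must be `1/2`. The real preimages of `1/2` are `±1/2` and `-1/2` has none, so the orbit started
at `±1/2`.
-/

open Function Polynomial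

def sqAddQuarter {K : Type*} [DivisionRing K] (x : K) : K := x ^ 2 + 1 / 4

theorem semiconj_sqAddQuarter {K L : Type*} [DivisionRing K] [DivisionRing L] (φ : K →+* L) :
    Semiconj φ sqAddQuarter sqAddQuarter := fun x => by
  simp [sqAddQuarter, map_ofNat]

section OrderedField

variable {K : Type*} [Field K] [LinearOrder K] [IsStrictOrderedRing K]

theorem id_le_sqAddQuarter : id ≤ (sqAddQuarter : K → K) := fun x => by
  simp only [id, sqAddQuarter]
  nlinarith [sq_nonneg (x - 1 / 2)]

theorem isFixedPt_sqAddQuarter_iff {x : K} : IsFixedPt sqAddQuarter x ↔ x = 1 / 2 := by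
  refine ⟨fun h => ?_, fun h => by subst h; norm_num [IsFixedPt, sqAddQuarter]⟩
  have : (x - 1 / 2) ^ 2 = 0 := by
    unfold IsFixedPt sqAddQuarter at h
    linear_combination h
  linarith [pow_eq_zero_iff (n := 2) two_ne_zero |>.mp this]

theorem mapsTo_sqAddQuarter_compl :
    Set.MapsTo sqAddQuarter ({1 / 2, -1 / 2} : Set K)ᶜ ({1 / 2, -1 / 2} : Set K)ᶜ := by
  intro x hx hfx
  simp only [Set.mem_compl_iff, Set.mem_insert_iff, Set.mem_singleton_iff, sqAddQuarter] at hx hfx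
  rcases hfx with h | h
  · have : (x - 1 / 2) * (x + 1 / 2) = 0 := by linear_combination h
    rcases mul_eq_zero.mp this with h' | h'
    · exact hx (.inl (by linear_combination h'))
    · exact hx (.inr (by linear_combination h'))
  · nlinarith [sq_nonneg x]

end OrderedField

theorem isFixedPt_iterate_of_id_le {α : Type*} [PartialOrder α] {f : α → α} (hf : id ≤ f)
    {x : α} {m n : ℕ} (hmn : m < n) (h : f^[n] x = f^[m] x) : IsFixedPt f (f^[m] x) := by
  refine le_antisymm ?_ (hf _)
  calc f (f^[m] x) = f^[m + 1] x := (iterate_succ_apply' f m x).symm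
    _ ≤ f^[n] x := monotone_iterate_of_id_le hf hmn x
    _ = f^[m] x := h

theorem eq_of_aeval_minpoly_ratCast {q : ℚ} {z : ℂ} (hz : aeval z (minpoly ℚ (q : ℂ)) = 0) :
    z = q := by
  rw [← eq_ratCast (algebraMap ℚ ℂ), minpoly.eq_X_sub_C] at hz
  simpa [sub_eq_zero] using hz

theorem stmt_16_general (α : ℂ) :
    ((∃ m n : ℕ, m < n ∧
        (fun x : ℂ => x^2 + 1/4)^[n] α = (fun x : ℂ => x^2 + 1/4)^[m] α) ∧
      (∀ z : ℂ, Polynomial.aeval z (minpoly ℚ α) = 0 → ∃ r : ℝ, z = (r : ℂ)))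
    ↔ α ∈ ({1/2, -1/2} : Set ℂ) := by
  change ((∃ m n : ℕ, m < n ∧ sqAddQuarter^[n] α = sqAddQuarter^[m] α) ∧ _) ↔ _
  constructor
  · rintro ⟨⟨m, n, hmn, hper⟩, htotally_real⟩
    obtain ⟨r, rfl⟩ := htotally_real α (minpoly.aeval ℚ α)
    have hiter := (semiconj_sqAddQuarter Complex.ofRealHom).iterate_right
    simp only [← Complex.ofRealHom_eq_coe, ← (hiter _).eq, Complex.ofRealHom.injective.eq_iff] at hper
    have hfix := isFixedPt_sqAddQuarter_iff.mp (isFixedPt_iterate_of_id_le id_le_sqAddQuarter hmn hper)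
    have hr : r ∈ ({1 / 2, -1 / 2} : Set ℝ) := by
      by_contra hr
      exact mapsTo_sqAddQuarter_compl.iterate m hr (.inl hfix)
    rcases hr with rfl | rfl <;> simp
  · intro hα
    obtain ⟨q, hq, rfl⟩ : ∃ q : ℚ, (q = 1 / 2 ∨ q = -1 / 2) ∧ (q : ℂ) = α := by
      rcases hα with rfl | rfl
      exacts [⟨1 / 2, .inl rfl, by push_cast; rfl⟩, ⟨-1 / 2, .inr rfl, by push_cast; rfl⟩]
    refine ⟨⟨1, 2, one_lt_two, ?_⟩, fun z hz => ⟨q, eq_of_aeval_minpoly_ratCast hz⟩⟩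
    rcases hq with rfl | rfl <;> norm_num [sqAddQuarter]

theorem stmt_16 (α : ℂ) (halg : IsAlgebraic ℚ α) :
    ((∃ m n : ℕ, m < n ∧
        (fun x : ℂ => x^2 + 1/4)^[n] α = (fun x : ℂ => x^2 + 1/4)^[m] α) ∧
      (∀ z : ℂ, Polynomial.aeval z (minpoly ℚ α) = 0 → ∃ r : ℝ, z = (r : ℂ)))
    ↔ α ∈ ({1/2, -1/2} : Set ℂ) :=
  stmt_16_general α
end
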